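/- arXiv:2101.04780 — 2 statements merged into one kernel-verified Lean document; each statement's English description precedes it below -/
import Mathlib

section
/- Let I' ⊊ I be finite sets, with τ_i ≥ 0 and κ_i > 0 for i ∈ I, and γ ≥ 0. Suppose that for every j ∈ I ∖ I', τ_j - κ_j(∑_{i∈I} τ_i - γ)/(∑_{i∈I} κ_i) ≤ 0. Then (∑_{i∈I'} τ_i - γ)/(∑_{i∈I'} κ_i) ≥ (∑_{i∈I} τ_i - γ)/(∑_{i∈I} κ_i), provided I' is nonempty. -/
/-!
The ratio over `I` is a mediant of the ratios over `I'` and `I \ I'`. Each removed node has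
`τ j ≤ χ̃(I) κ j`, so the removed part has ratio at most `χ̃(I)`, and hence the remaining part
has ratio at least `χ̃(I)`.
-/

open scoped BigOperators

theorem div_le_sub_div_sub {K : Type*} [Field K] [LinearOrder K] [IsStrictOrderedRing K]
    {A B R S : K} (hB : 0 < B) (hBS : 0 < B - S)
    (hR : R ≤ A / B * S) : A / B ≤ (A - R) / (B - S) := by
  rw [le_div_iff₀ hBS, mul_sub, div_mul_cancel₀ A hB.ne']
  linarith

theorem Finset.sum_le_mul_sum_of_le_mul {ι R : Type*} [CommSemiring R] [PartialOrder R]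
    [IsOrderedRing R] {s : Finset ι} {f g : ι → R} {c : R}
    (h : ∀ i ∈ s, f i ≤ c * g i) : ∑ i ∈ s, f i ≤ c * ∑ i ∈ s, g i := by
  rw [Finset.mul_sum]
  exact Finset.sum_le_sum h

theorem stmt_9_general {ι : Type*} [DecidableEq ι] (I' I : Finset ι) (hss : I' ⊂ I)
    (τ κ : ι → ℝ) (hκ : ∀ i ∈ I, 0 < κ i)
    (γ : ℝ)
    (hrem : ∀ j ∈ I \ I',
      τ j - κ j * ((∑ i ∈ I, τ i) - γ) / (∑ i ∈ I, κ i) ≤ 0)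
    (hne : I'.Nonempty) :
    ((∑ i ∈ I', τ i) - γ) / (∑ i ∈ I', κ i) ≥
      ((∑ i ∈ I, τ i) - γ) / (∑ i ∈ I, κ i) := by
  have hsub : I' ⊆ I := hss.subset
  have hK' : 0 < ∑ i ∈ I', κ i := Finset.sum_pos (fun i hi => hκ i (hsub hi)) hne
  have hK : 0 < ∑ i ∈ I, κ i := Finset.sum_pos hκ (hne.mono hsub)
  have hremoved : ∑ j ∈ I \ I', τ j ≤
      ((∑ i ∈ I, τ i) - γ) / (∑ i ∈ I, κ i) * ∑ j ∈ I \ I', κ j :=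
    Finset.sum_le_mul_sum_of_le_mul fun j hj => by
      have h := hrem j hj
      rw [mul_div_assoc, mul_comm] at h
      linarith
  have hτ' : (∑ i ∈ I', τ i) - γ = ((∑ i ∈ I, τ i) - γ) - ∑ j ∈ I \ I', τ j := by
    rw [Finset.sum_sdiff_eq_sub hsub]; ring
  have hκ' : ∑ i ∈ I', κ i = (∑ i ∈ I, κ i) - ∑ j ∈ I \ I', κ j := by
    rw [Finset.sum_sdiff_eq_sub hsub]; ring
  rw [hτ', hκ']
  exact div_le_sub_div_sub hK (hκ' ▸ hK') hremoved

/-- Removing nodes with nonpositive tentative allocation does not decrease the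
common ratio `(∑ τ - γ)/(∑ κ)`. -/
theorem stmt_9 {ι : Type*} [DecidableEq ι] (I' I : Finset ι) (hss : I' ⊂ I)
    (τ κ : ι → ℝ) (hτ : ∀ i ∈ I, 0 ≤ τ i) (hκ : ∀ i ∈ I, 0 < κ i)
    (γ : ℝ) (hγ : 0 ≤ γ)
    (hrem : ∀ j ∈ I \ I',
      τ j - κ j * ((∑ i ∈ I, τ i) - γ) / (∑ i ∈ I, κ i) ≤ 0)
    (hne : I'.Nonempty) :
    ((∑ i ∈ I', τ i) - γ) / (∑ i ∈ I', κ i) ≥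
      ((∑ i ∈ I, τ i) - γ) / (∑ i ∈ I, κ i) :=
  stmt_9_general I' I hss τ κ hκ γ hrem hne
end

section
/- Fix a finite dynamic set I_d, constants ζ_i > 0, ψ_i > 0, and points p̃_i, z_i ∈ ℝ² with Γ_i = z_i − p̃_i ≠ 0 for i ∈ I_d, and γ ≥ 0 with ∑_{i∈I_d} ζ_i‖Γ_i‖ > γ. Suppose ∑_{i∈I_d} ζ_i‖p_i − p̃_i‖ = γ, each p_i lies on the segment [p̃_i, z_i], and the ratios (ψ_i/ζ_i)‖p_i − z_i‖ are equal across i ∈ I_d. Then for each n ∈ I_d, ‖p_n − z_n‖ = (∑_{i∈I_d} ζ_i‖Γ_i‖ − γ) / ((ψ_n/ζ_n) ∑_{i∈I_d} ζ_i²/ψ_i). -/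
open scoped BigOperators

/-! A node on the segment from `p₀ i` to `z i` splits `‖Γ i‖` into the distance moved and the
residual distance, so the energy budget fixes `∑ ζ i ‖p i - z i‖ = ∑ ζ i ‖Γ i‖ - γ`. Equal moving
efficiency `c = (ψ i / ζ i) ‖p i - z i‖` turns the left side into `c ∑ ζ i ^ 2 / ψ i`, which
determines `c` and hence every residual. -/

theorem norm_sub_add_norm_sub_of_mem_segment {E : Type*} [SeminormedAddCommGroup E]
    [NormedSpace ℝ E] {x y p : E} (hp : p ∈ segment ℝ x y) :
    ‖p - x‖ + ‖p - y‖ = ‖y - x‖ := by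
  rw [norm_sub_rev y x]
  simpa [dist_eq_norm, norm_sub_rev x p] using dist_add_dist_of_mem_segment hp

theorem Finset.sum_mul_eq_mul_sum_sq_div_of_div_mul_eq {ι : Type*} {s : Finset ι}
    {ζ ψ r : ι → ℝ} {c : ℝ} (hζ : ∀ i ∈ s, ζ i ≠ 0) (hψ : ∀ i ∈ s, ψ i ≠ 0)
    (hc : ∀ i ∈ s, ψ i / ζ i * r i = c) :
    ∑ i ∈ s, ζ i * r i = c * ∑ i ∈ s, ζ i ^ 2 / ψ i := by
  rw [Finset.mul_sum]
  refine Finset.sum_congr rfl fun i hi => ?_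
  rw [← hc i hi]
  field_simp [hζ i hi, hψ i hi]

theorem stmt_14_general {ι : Type*} (Id : Finset ι)
    (ζ ψ : ι → ℝ) (hζ : ∀ i ∈ Id, 0 < ζ i) (hψ : ∀ i ∈ Id, 0 < ψ i)
    (p₀ z p : ι → EuclideanSpace ℝ (Fin 2))
    (Γ : ι → EuclideanSpace ℝ (Fin 2)) (hΓ : ∀ i ∈ Id, Γ i = z i - p₀ i)
    (γ : ℝ)
    (htot : ∑ i ∈ Id, ζ i * ‖p i - p₀ i‖ = γ)
    (hseg : ∀ i ∈ Id, p i ∈ segment ℝ (p₀ i) (z i))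
    (heq : ∀ i ∈ Id, ∀ j ∈ Id,
      (ψ i / ζ i) * ‖p i - z i‖ = (ψ j / ζ j) * ‖p j - z j‖) :
    ∀ n ∈ Id, ‖p n - z n‖ =
      ((∑ i ∈ Id, ζ i * ‖Γ i‖) - γ) /
        ((ψ n / ζ n) * ∑ i ∈ Id, ζ i ^ 2 / ψ i) := by
  intro n hn
  have hresidual : ∑ i ∈ Id, ζ i * ‖p i - z i‖ = (∑ i ∈ Id, ζ i * ‖Γ i‖) - γ := by
    rw [← htot, ← Finset.sum_sub_distrib]
    refine Finset.sum_congr rfl fun i hi => ?_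
    rw [hΓ i hi, ← norm_sub_add_norm_sub_of_mem_segment (hseg i hi)]
    ring
  have hefficiency := Finset.sum_mul_eq_mul_sum_sq_div_of_div_mul_eq
    (fun i hi => (hζ i hi).ne') (fun i hi => (hψ i hi).ne') (fun i hi => heq i hi n hn)
  have hD : 0 < ∑ i ∈ Id, ζ i ^ 2 / ψ i :=
    Finset.sum_pos (fun i hi => div_pos (pow_pos (hζ i hi) 2) (hψ i hi)) ⟨n, hn⟩
  have hrate : 0 < ψ n / ζ n := div_pos (hψ n hn) (hζ n hn)
  rw [eq_div_iff (by positivity), ← hresidual, hefficiency]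
  ring

/-- Closed-form residual distance of each dynamic node in the
movement-constrained optimal deployment. -/
theorem stmt_14 {ι : Type*} (Id : Finset ι)
    (ζ ψ : ι → ℝ) (hζ : ∀ i ∈ Id, 0 < ζ i) (hψ : ∀ i ∈ Id, 0 < ψ i)
    (p₀ z p : ι → EuclideanSpace ℝ (Fin 2))
    (Γ : ι → EuclideanSpace ℝ (Fin 2)) (hΓ : ∀ i ∈ Id, Γ i = z i - p₀ i)
    (hΓ0 : ∀ i ∈ Id, Γ i ≠ 0)
    (γ : ℝ) (hγ : 0 ≤ γ) (hbig : γ < ∑ i ∈ Id, ζ i * ‖Γ i‖)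
    (htot : ∑ i ∈ Id, ζ i * ‖p i - p₀ i‖ = γ)
    (hseg : ∀ i ∈ Id, p i ∈ segment ℝ (p₀ i) (z i))
    (heq : ∀ i ∈ Id, ∀ j ∈ Id,
      (ψ i / ζ i) * ‖p i - z i‖ = (ψ j / ζ j) * ‖p j - z j‖) :
    ∀ n ∈ Id, ‖p n - z n‖ =
      ((∑ i ∈ Id, ζ i * ‖Γ i‖) - γ) /
        ((ψ n / ζ n) * ∑ i ∈ Id, ζ i ^ 2 / ψ i) :=
  stmt_14_general Id ζ ψ hζ hψ p₀ z p Γ hΓ γ htot hseg heq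
end
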